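/- arXiv:1111.4166 — 4 statements merged into one kernel-verified Lean document; each statement's English description precedes it below -/
import Mathlib

section
/- In a semigraph algebra, the range projections of any two half-standard words commute: if a = xp and b = yq with x, y ∈ 𝒯₁ and p, q ∈ 𝒫, then (aa*)(bb*) = (bb*)(aa*). -/
/-- The set of minimal common extensions `𝒯₁^{(min)}(x,y)` of `x` and `y`:
pairs `(α,β)` in `𝒯₁` with `xα = yβ ≠ 0` of degree `d(x) ⊔ d(y)`. -/
def mceSet {k X : Type*} [Ring X] (T1 : Set X) (deg : X → (k →₀ ℕ))
    (x y : X) : Set (X × X) :=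
  {ab | ab.1 ∈ T1 ∧ ab.2 ∈ T1 ∧ x * ab.1 ≠ 0 ∧ x * ab.1 = y * ab.2 ∧
    deg (x * ab.1) = deg x ⊔ deg y}

/-- A `k`-semigraph algebra (Definition `DefSemigraphAlgebra`): a `*`-algebra
generated by a commuting multiplicatively closed set `𝒫` of projections and a
set `𝒯` of nonzero partial isometries forming a non-unital finitely aligned
`k`-semigraph (with unitization `𝒯₁ = 𝒯 ∪ {1}`), subject to the commutation
relations `p x = x q`, the expansion of `x* y` over minimal common extensions,
and carrying a gauge action (equivalently, it is the quotient of the free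
`*`-algebra by a subset of the fiber space). -/
structure SemigraphAlgebra (k : Type*) (X : Type*) [Ring X] [StarRing X]
    [Algebra ℂ X] where
  P : Set X
  T : Set X
  deg : X → (k →₀ ℕ)
  P_isProj : ∀ p ∈ P, p * p = p ∧ star p = p
  P_comm : ∀ p ∈ P, ∀ q ∈ P, p * q = q * p
  P_mulClosed : ∀ p ∈ P, ∀ q ∈ P, p * q ∈ P
  disjoint : ∀ t ∈ T, t ∉ P
  T_ne_zero : ∀ t ∈ T, t ≠ 0
  T_pisom : ∀ t ∈ T, t * star t * t = t
  T_mulClosed : ∀ s ∈ T, ∀ t ∈ T, s * t ≠ 0 → s * t ∈ T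
  one_notMem : (1 : X) ∉ T
  deg_one : deg 1 = 0
  deg_pos : ∀ t ∈ T, deg t ≠ 0
  deg_mul : ∀ s ∈ T, ∀ t ∈ T, s * t ≠ 0 → deg (s * t) = deg s + deg t
  ufp : ∀ x ∈ T, ∀ n₁ n₂ : k →₀ ℕ, deg x = n₁ + n₂ →
    ∃! ab : X × X, ab.1 ∈ insert (1:X) T ∧ ab.2 ∈ insert (1:X) T ∧
      x = ab.1 * ab.2 ∧ deg ab.1 = n₁ ∧ deg ab.2 = n₂
  finitelyAligned : ∀ x ∈ insert (1:X) T, ∀ y ∈ insert (1:X) T,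
    (mceSet (insert (1:X) T) deg x y).Finite
  P_commute_T : ∀ x ∈ T, ∀ p ∈ P, ∃ q ∈ P, p * x = x * q
  expansion : ∀ x (hx : x ∈ T), ∀ y (hy : y ∈ T), ∃ q : X × X → X,
    (∀ ab ∈ mceSet (insert (1:X) T) deg x y, q ab ∈ P) ∧
    star x * y =
      ∑ ab ∈ (finitelyAligned x (Set.mem_insert_of_mem _ hx)
          y (Set.mem_insert_of_mem _ hy)).toFinset,
        ab.1 * q ab * star ab.2
  gauge : ∀ lam : k → ℂ, (∀ i, ‖lam i‖ = 1) →
    ∃ σ : X ≃ₐ[ℂ] X, (∀ p ∈ P, σ p = p) ∧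
      ∀ t ∈ T, σ t = (∏ i ∈ (deg t).support, lam i ^ (deg t i)) • t

namespace SemigraphAlgebra

variable {k X : Type*} [Ring X] [StarRing X] [Algebra ℂ X]

/-- `𝒯₁`, the unitization of the semigraph `𝒯`. -/
def T1 (A : SemigraphAlgebra k X) : Set X := insert 1 A.T

end SemigraphAlgebra

/-!
Both range projections are self-adjoint, so they commute as soon as their product
`x p x* y q y* = x (p x* y q) y*` is self-adjoint. Expanding `x* y` over the minimal common
extensions `x α = y β` and moving `p` and `q` past `α` and `β*` writes `p x* y q` as a sum of
terms `α r β*` with `r ∈ 𝒫`; each such term contributes `(x α) r (x α)*` to the product,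
which is self-adjoint.
-/

theorem IsStarProjection.mul_mul_star_mul {R : Type*} [Semigroup R] [StarMul R] {p : R}
    (hp : IsStarProjection p) (z : R) : z * p * star (z * p) = z * p * star z := by
  rw [star_mul, hp.isSelfAdjoint.star_eq, ← mul_assoc, mul_assoc z p p,
    hp.isIdempotentElem.eq]

namespace SemigraphAlgebra

variable {k X : Type*} [Ring X] [StarRing X] [Algebra ℂ X] (A : SemigraphAlgebra k X)

theorem isStarProjection_of_mem_P {p : X} (hp : p ∈ A.P) : IsStarProjection p :=
  isStarProjection_iff'.2 (A.P_isProj p hp)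

theorem exists_mul_eq_mul_of_mem_T1 {z r : X} (hz : z ∈ A.T1) (hr : r ∈ A.P) :
    ∃ r' ∈ A.P, r * z = z * r' := by
  rcases hz with rfl | hz
  · exact ⟨r, hr, by rw [one_mul, mul_one]⟩
  · exact A.P_commute_T z hz r hr

theorem exists_star_mul_eq_mul_star_of_mem_T1 {z r : X} (hz : z ∈ A.T1) (hr : r ∈ A.P) :
    ∃ r' ∈ A.P, star z * r = r' * star z := by
  obtain ⟨r', hr', h⟩ := A.exists_mul_eq_mul_of_mem_T1 hz hr
  refine ⟨r', hr', ?_⟩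
  rw [← (A.isStarProjection_of_mem_P hr).isSelfAdjoint.star_eq,
    ← (A.isStarProjection_of_mem_P hr').isSelfAdjoint.star_eq, ← star_mul, ← star_mul, h]

def extensionSums (x y : X) : AddSubmonoid X :=
  AddSubmonoid.closure {m | ∃ α β r, r ∈ A.P ∧ x * α = y * β ∧ m = α * r * star β}

theorem isSelfAdjoint_mul_mul_star_of_mem_extensionSums {x y m : X}
    (hm : m ∈ A.extensionSums x y) : IsSelfAdjoint (x * m * star y) := by
  induction hm using AddSubmonoid.closure_induction with
  | mem m hm =>
    obtain ⟨α, β, r, hr, hxy, rfl⟩ := hm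
    have h : x * (α * r * star β) * star y = x * α * r * star (x * α) := by
      simp only [← mul_assoc]
      rw [hxy, star_mul]
      simp only [mul_assoc]
    rw [h]
    exact (A.isStarProjection_of_mem_P hr).isSelfAdjoint.conjugate _
  | zero => simp
  | add m n _ _ hm hn =>
    rw [mul_add, add_mul]
    exact hm.add hn

theorem mul_mul_mul_star_mul_mem_extensionSums {x y α β p r q : X} (hα : α ∈ A.T1)
    (hβ : β ∈ A.T1) (hxy : x * α = y * β) (hp : p ∈ A.P) (hr : r ∈ A.P) (hq : q ∈ A.P) :
    p * (α * r * star β) * q ∈ A.extensionSums x y := by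
  obtain ⟨p', hp', hpα⟩ := A.exists_mul_eq_mul_of_mem_T1 hα hp
  obtain ⟨q', hq', hβq⟩ := A.exists_star_mul_eq_mul_star_of_mem_T1 hβ hq
  refine AddSubmonoid.subset_closure
    ⟨α, β, p' * r * q', A.P_mulClosed _ (A.P_mulClosed _ hp' _ hr) _ hq', hxy, ?_⟩
  rw [← mul_assoc, ← mul_assoc, hpα, mul_assoc, hβq]
  simp only [mul_assoc]

theorem mul_star_mul_mul_mem_extensionSums {x y p q : X} (hx : x ∈ A.T1) (hy : y ∈ A.T1)
    (hp : p ∈ A.P) (hq : q ∈ A.P) : p * (star x * y) * q ∈ A.extensionSums x y := by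
  rcases hx with rfl | hx
  · obtain ⟨p', hp', hpy⟩ := A.exists_mul_eq_mul_of_mem_T1 hy hp
    refine AddSubmonoid.subset_closure
      ⟨y, 1, p' * q, A.P_mulClosed _ hp' _ hq, by rw [one_mul, mul_one], ?_⟩
    rw [star_one, one_mul, mul_one, hpy, mul_assoc]
  rcases hy with rfl | hy
  · obtain ⟨q', hq', hxq⟩ := A.exists_star_mul_eq_mul_star_of_mem_T1 (Set.mem_insert_of_mem _ hx) hq
    refine AddSubmonoid.subset_closure
      ⟨1, x, p * q', A.P_mulClosed _ hp _ hq', by rw [one_mul, mul_one], ?_⟩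
    rw [mul_one, mul_assoc, hxq, one_mul, mul_assoc]
  obtain ⟨r, hr, hexp⟩ := A.expansion x hx y hy
  rw [hexp, Finset.mul_sum, Finset.sum_mul]
  refine sum_mem fun ab hab => ?_
  have hmce := (Set.Finite.mem_toFinset _).1 hab
  obtain ⟨hα, hβ, -, hxy, -⟩ := id hmce
  exact A.mul_mul_mul_star_mul_mem_extensionSums hα hβ hxy hp (hr ab hmce) hq

end SemigraphAlgebra

/-- In a semigraph algebra, the range projections of any two half-standard
words `a = xp`, `b = yq` (`x, y ∈ 𝒯₁`, `p, q ∈ 𝒫`) commute. -/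
theorem SemigraphAlgebra.halfStandard_range_proj_comm
    {k X : Type*} [Ring X] [StarRing X] [Algebra ℂ X]
    (A : SemigraphAlgebra k X) (x y p q : X)
    (hx : x ∈ A.T1) (hy : y ∈ A.T1) (hp : p ∈ A.P) (hq : q ∈ A.P) :
    ((x * p) * star (x * p)) * ((y * q) * star (y * q)) =
      ((y * q) * star (y * q)) * ((x * p) * star (x * p)) := by
  have hpP := A.isStarProjection_of_mem_P hp
  have hqP := A.isStarProjection_of_mem_P hq
  rw [hpP.mul_mul_star_mul, hqP.mul_mul_star_mul]
  refine ((IsSelfAdjoint.commute_iff (hpP.isSelfAdjoint.conjugate x)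
    (hqP.isSelfAdjoint.conjugate y)).2 ?_).eq
  have h : x * p * star x * (y * q * star y) = x * (p * (star x * y) * q) * star y := by
    simp only [mul_assoc]
  rw [h]
  exact A.isSelfAdjoint_mul_mul_star_of_mem_extensionSums
    (A.mul_star_mul_mul_mem_extensionSums hx hy hp hq)
end

section
/- In a semigraph algebra, every word in the generators 𝒯 ∪ 𝒫 ∪ 𝒯* ∪ 𝒫* is a partial isometry, and the set of words forms an inverse semigroup (modulo zero): the product of two words is a word or zero, the adjoint of a word is a word, and source and range projections of all words commute with each other. -/
namespace SemigraphAlgebra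

variable {k X : Type*} [Ring X] [StarRing X] [Algebra ℂ X]

/-- A word in the generators `𝒯 ∪ 𝒫 ∪ 𝒯* ∪ 𝒫*`, encoded as a nonempty list of
letters, each a generator together with a flag recording a star. -/
def IsWordList (A : SemigraphAlgebra k X) (l : List (X × Bool)) : Prop :=
  l ≠ [] ∧ ∀ a ∈ l, a.1 ∈ A.T ∪ A.P

/-- The element of `X` represented by a word. -/
def evalWord (l : List (X × Bool)) : X :=
  (l.map fun a => if a.2 then star a.1 else a.1).prod

/-- The formal adjoint of a word. -/
def starWord (l : List (X × Bool)) : List (X × Bool) :=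
  l.reverse.map fun a => (a.1, !a.2)

end SemigraphAlgebra

/-!
Every word is a sum `∑ αᵢ pᵢ βᵢ*` with `αᵢ, βᵢ ∈ 𝒯₁` and `pᵢ ∈ 𝒫₁`, in which the `αᵢ` are
distinct paths of one common degree, and so are the `βᵢ`. Such sums are closed under adjoints and
products: in `(α p β*)(γ q δ*)` the factor `β* γ` expands over the minimal common extensions
`(e₁, e₂)` of `β` and `γ`, the projections are moved past `e₁, e₂` by the relations `p x = x q`,
and unique factorisation shows that the new legs `α e₁` are again distinct, as are the `δ e₂`.
Distinct paths of equal degree are orthogonal, so each such sum is a partial isometry whose range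
projection has the form `∑ μᵢ cᵢ μᵢ*`. The product of two sums of that form expands into terms
`ν c ν*`, so it is self-adjoint, and therefore the two projections commute.
-/

theorem star_list_prod {M : Type*} [Monoid M] [StarMul M] (L : List M) :
    star L.prod = (L.map star).reverse.prod := by
  induction L with
  | nil => simp
  | cons a L ih => simp [star_mul, ih]

theorem Finset.sum_mul_sum_eq_sum_of_ne {ι R : Type*} [NonUnitalNonAssocSemiring R]
    (s : Finset ι) (f g : ι → R) (h : ∀ i ∈ s, ∀ j ∈ s, i ≠ j → f i * g j = 0) :
    (∑ i ∈ s, f i) * ∑ i ∈ s, g i = ∑ i ∈ s, f i * g i := by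
  rw [Finset.sum_mul_sum]
  exact Finset.sum_congr rfl fun i hi =>
    Finset.sum_eq_single_of_mem i hi fun j hj hji => h i hi j hj hji.symm

namespace SemigraphAlgebra

section Words

variable {X : Type*} [Ring X] [StarRing X]

lemma evalWord_append (l l' : List (X × Bool)) :
    evalWord (l ++ l') = evalWord l * evalWord l' := by
  simp only [evalWord, List.map_append, List.prod_append]

lemma evalWord_starWord (l : List (X × Bool)) : evalWord (starWord l) = star (evalWord l) := by
  rw [evalWord, evalWord, starWord, List.map_map, star_list_prod, List.map_map, ← List.map_reverse]
  congr 2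
  funext a
  rcases a with ⟨x, _ | _⟩ <;> simp

end Words

structure Triple (X : Type*) where
  left : X
  mid : X
  right : X

namespace Triple

variable {X : Type*}

def val [Mul X] [Star X] (τ : Triple X) : X := τ.left * τ.mid * star τ.right

@[simps]
def swap (τ : Triple X) : Triple X := ⟨τ.right, τ.mid, τ.left⟩

lemma swap_injective : Function.Injective (swap : Triple X → Triple X) := by
  rintro ⟨a, b, c⟩ ⟨a', b', c'⟩ h
  simp_all [swap]

lemma star_val [Monoid X] [StarMul X] {τ : Triple X} (h : IsSelfAdjoint τ.mid) :
    star τ.val = τ.swap.val := by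
  simp only [val, swap, star_mul, star_star, h.star_eq, mul_assoc]

lemma isSelfAdjoint_val [Monoid X] [StarMul X] {τ : Triple X} (h : IsSelfAdjoint τ.mid)
    (hlr : τ.right = τ.left) : IsSelfAdjoint τ.val := by
  rw [isSelfAdjoint_iff, star_val h]
  simp only [val, swap, hlr]

lemma val_mul_val_eq_zero [MonoidWithZero X] [StarMul X] {τ σ : Triple X}
    (h : star τ.right * σ.left = 0) : τ.val * σ.val = 0 := by
  calc τ.val * σ.val = τ.left * τ.mid * (star τ.right * σ.left) * σ.mid * star σ.right := by
        simp only [val, mul_assoc]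
    _ = 0 := by rw [h, mul_zero, zero_mul, zero_mul]

lemma left_ne_zero_of_val_ne_zero [MonoidWithZero X] [Star X] {τ : Triple X}
    (h : τ.val ≠ 0) : τ.left ≠ 0 := by
  rintro h0
  simp [val, h0] at h

lemma right_ne_zero_of_val_ne_zero [Semiring X] [StarRing X] {τ : Triple X}
    (h : τ.val ≠ 0) : τ.right ≠ 0 := by
  rintro h0
  simp [val, h0] at h

end Triple

variable {k X : Type*} [Ring X] [StarRing X] [Algebra ℂ X] {A : SemigraphAlgebra k X}

variable (A) in
def P1 : Set X := insert 1 A.P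

lemma one_mem_P1 : (1 : X) ∈ A.P1 := Set.mem_insert _ _

lemma one_mem_T1 : (1 : X) ∈ A.T1 := Set.mem_insert _ _

lemma mem_T1_of_mem_T {x : X} (hx : x ∈ A.T) : x ∈ A.T1 := Set.mem_insert_of_mem _ hx

lemma isSelfAdjoint_of_mem_P1 {p : X} (hp : p ∈ A.P1) : IsSelfAdjoint p := by
  rcases hp with rfl | hp
  exacts [IsSelfAdjoint.one X, (A.P_isProj p hp).2]

lemma mul_self_of_mem_P1 {p : X} (hp : p ∈ A.P1) : p * p = p := by
  rcases hp with rfl | hp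
  exacts [one_mul 1, (A.P_isProj p hp).1]

lemma commute_of_mem_P1 {p q : X} (hp : p ∈ A.P1) (hq : q ∈ A.P1) : Commute p q := by
  rcases hp with rfl | hp
  · exact Commute.one_left q
  rcases hq with rfl | hq
  · exact Commute.one_right p
  exact A.P_comm p hp q hq

lemma mul_mem_P1 {p q : X} (hp : p ∈ A.P1) (hq : q ∈ A.P1) : p * q ∈ A.P1 := by
  rcases hp with rfl | hp
  · rwa [one_mul]
  rcases hq with rfl | hq
  · rw [mul_one]; exact Set.mem_insert_of_mem _ hp
  exact Set.mem_insert_of_mem _ (A.P_mulClosed p hp q hq)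

lemma mul_mem_T1 {a b : X} (ha : a ∈ A.T1) (hb : b ∈ A.T1) (h : a * b ≠ 0) :
    a * b ∈ A.T1 := by
  rcases ha with rfl | ha
  · rwa [one_mul]
  rcases hb with rfl | hb
  · rw [mul_one]; exact mem_T1_of_mem_T ha
  exact mem_T1_of_mem_T (A.T_mulClosed a ha b hb h)

lemma deg_mul_of_mem_T1 {a b : X} (ha : a ∈ A.T1) (hb : b ∈ A.T1) (h : a * b ≠ 0) :
    A.deg (a * b) = A.deg a + A.deg b := by
  rcases ha with rfl | ha
  · rw [one_mul, A.deg_one, zero_add]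
  rcases hb with rfl | hb
  · rw [mul_one, A.deg_one, add_zero]
  exact A.deg_mul a ha b hb h

lemma eq_one_of_deg_eq_zero {a : X} (ha : a ∈ A.T1) (h : A.deg a = 0) : a = 1 := by
  rcases ha with rfl | ha
  exacts [rfl, absurd h (A.deg_pos a ha)]

lemma eq_one_of_deg_mul_eq {a b : X} (ha : a ∈ A.T1) (hb : b ∈ A.T1) (h : a * b ≠ 0)
    (hdeg : A.deg (a * b) = A.deg a) : b = 1 := by
  rw [deg_mul_of_mem_T1 ha hb h] at hdeg
  exact eq_one_of_deg_eq_zero hb (add_eq_left.1 hdeg)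

lemma exists_mul_eq_mul_of_mem_P1 {x p : X} (hx : x ∈ A.T1) (hp : p ∈ A.P1) :
    ∃ q ∈ A.P1, p * x = x * q := by
  rcases hp with rfl | hp
  · exact ⟨1, one_mem_P1, by rw [one_mul, mul_one]⟩
  rcases hx with rfl | hx
  · exact ⟨p, Set.mem_insert_of_mem _ hp, by rw [one_mul, mul_one]⟩
  obtain ⟨q, hq, h⟩ := A.P_commute_T x hx p hp
  exact ⟨q, Set.mem_insert_of_mem _ hq, h⟩

lemma exists_star_mul_eq_mul_star_of_mem_P1 {x p : X} (hx : x ∈ A.T1) (hp : p ∈ A.P1) :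
    ∃ q ∈ A.P1, star x * p = q * star x := by
  obtain ⟨q, hq, h⟩ := exists_mul_eq_mul_of_mem_P1 hx hp
  refine ⟨q, hq, ?_⟩
  simpa only [star_mul, (isSelfAdjoint_of_mem_P1 hp).star_eq,
    (isSelfAdjoint_of_mem_P1 hq).star_eq] using congrArg star h

lemma mul_star_mul_self_of_mem_T1 {x : X} (hx : x ∈ A.T1) : x * star x * x = x := by
  rcases hx with rfl | hx
  · simp
  exact A.T_pisom x hx

lemma star_mul_mul_star_of_mem_T1 {x : X} (hx : x ∈ A.T1) :
    star x * x * star x = star x := by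
  simpa only [star_mul, star_star, mul_assoc] using congrArg star (mul_star_mul_self_of_mem_T1 hx)

lemma swap_mem_mceSet {x y : X} {e : X × X} (he : e ∈ mceSet A.T1 A.deg x y) :
    e.swap ∈ mceSet A.T1 A.deg y x := by
  obtain ⟨h1, h2, hne, heq, hdeg⟩ := he
  exact ⟨h2, h1, heq ▸ hne, heq.symm, by rw [Prod.fst_swap, ← heq, hdeg, sup_comm]⟩

lemma deg_fst_of_mem_mceSet {x y : X} {e : X × X} (hx : x ∈ A.T1)
    (he : e ∈ mceSet A.T1 A.deg x y) : A.deg e.1 = (A.deg x ⊔ A.deg y) - A.deg x := by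
  obtain ⟨h1, -, hne, -, hdeg⟩ := he
  rw [← hdeg, A.deg_mul_of_mem_T1 hx h1 hne, add_tsub_cancel_left]

lemma deg_snd_of_mem_mceSet {x y : X} {e : X × X} (hy : y ∈ A.T1)
    (he : e ∈ mceSet A.T1 A.deg x y) : A.deg e.2 = (A.deg x ⊔ A.deg y) - A.deg y := by
  rw [sup_comm]
  exact deg_fst_of_mem_mceSet hy (swap_mem_mceSet he)

lemma eq_of_mem_mceSet_of_deg_eq {x y : X} {e : X × X} (hx : x ∈ A.T) (hy : y ∈ A.T)
    (hd : A.deg x = A.deg y) (he : e ∈ mceSet A.T1 A.deg x y) : e = (1, 1) ∧ x = y := by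
  obtain ⟨h1, h2, hne, heq, hdeg⟩ := he
  rw [← hd, sup_idem] at hdeg
  have he1 : e.1 = 1 := eq_one_of_deg_mul_eq (mem_T1_of_mem_T hx) h1 hne hdeg
  rw [he1, mul_one] at heq hne hdeg
  have he2 : e.2 = 1 :=
    eq_one_of_deg_mul_eq (mem_T1_of_mem_T hy) h2 (heq ▸ hne) (by rw [← heq, hdeg, hd])
  rw [he2, mul_one] at heq
  exact ⟨Prod.ext he1 he2, heq⟩

lemma star_mul_eq_zero_of_deg_eq {x y : X} (hx : x ∈ A.T1) (hy : y ∈ A.T1)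
    (hd : A.deg x = A.deg y) (hne : x ≠ y) : star x * y = 0 := by
  rcases hx with rfl | hx <;> rcases hy with rfl | hy
  · exact absurd rfl hne
  · exact absurd (by rw [← hd, A.deg_one]) (A.deg_pos y hy)
  · exact absurd (by rw [hd, A.deg_one]) (A.deg_pos x hx)
  obtain ⟨q, -, hexp⟩ := A.expansion x hx y hy
  rw [hexp, Finset.sum_eq_zero]
  intro e he
  exact absurd (eq_of_mem_mceSet_of_deg_eq hx hy hd ((Set.Finite.mem_toFinset _).1 he)).2 hne

lemma exists_star_mul_self_eq {x : X} (hx : x ∈ A.T1) : ∃ q ∈ A.P1, star x * x = q := by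
  rcases hx with rfl | hx
  · exact ⟨1, one_mem_P1, by simp⟩
  obtain ⟨q, hq, hexp⟩ := A.expansion x hx x hx
  have hone : ((1 : X), (1 : X)) ∈ mceSet A.T1 A.deg x x :=
    ⟨one_mem_T1, one_mem_T1, by simpa using A.T_ne_zero x hx, rfl, by simp⟩
  have hsingle : (A.finitelyAligned x (mem_T1_of_mem_T hx) x (mem_T1_of_mem_T hx)).toFinset
      = {(1, 1)} := by
    refine Finset.eq_singleton_iff_unique_mem.2 ⟨(Set.Finite.mem_toFinset _).2 hone, ?_⟩
    exact fun e he => (eq_of_mem_mceSet_of_deg_eq hx hx rfl ((Set.Finite.mem_toFinset _).1 he)).1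
  refine ⟨q (1, 1), Set.mem_insert_of_mem _ (hq _ hone), ?_⟩
  rw [hexp, hsingle, Finset.sum_singleton]
  simp

lemma eq_and_eq_of_mul_eq_mul {a b a' b' : X} (ha : a ∈ A.T1) (hb : b ∈ A.T1)
    (ha' : a' ∈ A.T1) (hb' : b' ∈ A.T1) (hd : A.deg a = A.deg a') (heq : a * b = a' * b')
    (hne : a * b ≠ 0) : a = a' ∧ b = b' := by
  have hne' : a' * b' ≠ 0 := heq ▸ hne
  have hdb : A.deg b = A.deg b' := by
    have := congrArg A.deg heq
    rwa [A.deg_mul_of_mem_T1 ha hb hne, A.deg_mul_of_mem_T1 ha' hb' hne', hd,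
      add_right_inj] at this
  rcases A.mul_mem_T1 ha hb hne with h1 | hT
  · have h0 : A.deg a + A.deg b = 0 := by rw [← A.deg_mul_of_mem_T1 ha hb hne, h1, A.deg_one]
    obtain ⟨hda, hdb'⟩ := add_eq_zero.1 h0
    exact ⟨(eq_one_of_deg_eq_zero ha hda).trans (eq_one_of_deg_eq_zero ha' (hd ▸ hda)).symm,
      (eq_one_of_deg_eq_zero hb hdb').trans (eq_one_of_deg_eq_zero hb' (hdb ▸ hdb')).symm⟩
  obtain ⟨_, -, huniq⟩ := A.ufp (a * b) hT (A.deg a) (A.deg b) (A.deg_mul_of_mem_T1 ha hb hne)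
  have h := (huniq (a, b) ⟨ha, hb, rfl, rfl, rfl⟩).trans
    (huniq (a', b') ⟨ha', hb', heq, hd.symm, hdb.symm⟩).symm
  exact Prod.ext_iff.1 h

lemma exists_star_mul_eq_sum {x y : X} (hx : x ∈ A.T1) (hy : y ∈ A.T1) :
    ∃ E : Finset (X × X), (∀ e ∈ E, e ∈ mceSet A.T1 A.deg x y) ∧
      ∃ q : X × X → X, (∀ e ∈ E, q e ∈ A.P1) ∧
        star x * y = ∑ e ∈ E, e.1 * q e * star e.2 := by
  rcases hx with rfl | hx
  · -- `y = 0` happens only in the zero algebra, where `1 ∈ 𝒯₁` vanishes.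
    by_cases hy0 : y = 0
    · exact ⟨∅, by simp, fun _ => 1, by simp, by simp [hy0]⟩
    refine ⟨{(y, 1)}, ?_, fun _ => 1, by simp [one_mem_P1], by simp⟩
    simp only [Finset.mem_singleton, forall_eq]
    exact ⟨hy, one_mem_T1, by simpa using hy0, by simp, by simp [A.deg_one]⟩
  rcases hy with rfl | hy
  · refine ⟨{(1, x)}, ?_, fun _ => 1, by simp [one_mem_P1], by simp⟩
    simp only [Finset.mem_singleton, forall_eq]
    exact ⟨one_mem_T1, mem_T1_of_mem_T hx, by simpa using A.T_ne_zero x hx, by simp,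
      by simp [A.deg_one]⟩
  obtain ⟨q, hq, hexp⟩ := A.expansion x hx y hy
  exact ⟨_, fun e he => (Set.Finite.mem_toFinset _).1 he, q,
    fun e he => Set.mem_insert_of_mem _ (hq e ((Set.Finite.mem_toFinset _).1 he)), hexp⟩

variable (A) in
def IsStd (τ : Triple X) : Prop := τ.left ∈ A.T1 ∧ τ.mid ∈ A.P1 ∧ τ.right ∈ A.T1

lemma IsStd.swap {τ : Triple X} (hτ : A.IsStd τ) : A.IsStd τ.swap :=
  ⟨hτ.2.2, hτ.2.1, hτ.1⟩

lemma IsStd.star_val {τ : Triple X} (hτ : A.IsStd τ) : star τ.val = τ.swap.val :=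
  Triple.star_val (isSelfAdjoint_of_mem_P1 hτ.2.1)

lemma IsStd.val_mul_star_val_mul_val {τ : Triple X} (hτ : A.IsStd τ) :
    τ.val * star τ.val * τ.val = τ.val := by
  obtain ⟨hα, hp, hβ⟩ := hτ
  obtain ⟨qα, hqα, hsα⟩ := exists_star_mul_self_eq hα
  obtain ⟨qβ, hqβ, hsβ⟩ := exists_star_mul_self_eq hβ
  have hpβ := commute_of_mem_P1 hp hqβ
  have hpα := commute_of_mem_P1 hp hqα
  have hpp := mul_self_of_mem_P1 hp
  have key : τ.mid * qβ * τ.mid * qα * τ.mid = qα * τ.mid * qβ := by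
    rw [hpβ.eq, mul_assoc qβ, hpp, mul_assoc qβ, hpα.eq, mul_assoc, mul_assoc, hpp,
      ← mul_assoc, (commute_of_mem_P1 hqβ hqα).eq, mul_assoc, ← hpβ.eq, ← mul_assoc]
  calc τ.val * star τ.val * τ.val
      = τ.left * (τ.mid * (star τ.right * τ.right) * τ.mid * (star τ.left * τ.left) * τ.mid)
          * star τ.right := by
        simp only [Triple.val, star_mul, star_star, (isSelfAdjoint_of_mem_P1 hp).star_eq, mul_assoc]
    _ = τ.left * (star τ.left * τ.left) * τ.mid * (star τ.right * τ.right * star τ.right) := by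
        rw [hsα, hsβ, key]; simp only [mul_assoc]
    _ = τ.val := by
        rw [← mul_assoc τ.left, mul_star_mul_self_of_mem_T1 hα, star_mul_mul_star_of_mem_T1 hβ]
        rfl

lemma IsStd.exists_val_mul_val_eq_sum {τ σ : Triple X} (hτ : A.IsStd τ) (hσ : A.IsStd σ) :
    ∃ E : Finset (X × X), (∀ e ∈ E, e ∈ mceSet A.T1 A.deg τ.right σ.left) ∧
      ∃ m : X × X → X, (∀ e ∈ E, m e ∈ A.P1) ∧
        τ.val * σ.val = ∑ e ∈ E, (⟨τ.left * e.1, m e, σ.right * e.2⟩ : Triple X).val := by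
  obtain ⟨E, hE, q, hq, hexp⟩ := exists_star_mul_eq_sum hτ.2.2 hσ.1
  choose! c hc hce using fun e (he : e ∈ E) => exists_mul_eq_mul_of_mem_P1 (hE e he).1 hτ.2.1
  choose! d hd hde using fun e (he : e ∈ E) =>
    exists_star_mul_eq_mul_star_of_mem_P1 (hE e he).2.1 hσ.2.1
  refine ⟨E, hE, fun e => c e * q e * d e, fun e he => mul_mem_P1 (mul_mem_P1 (hc e he) (hq e he))
    (hd e he), ?_⟩
  calc τ.val * σ.val = τ.left * τ.mid * (star τ.right * σ.left) * σ.mid * star σ.right := by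
        simp only [Triple.val, mul_assoc]
    _ = ∑ e ∈ E, τ.left * (τ.mid * e.1) * q e * (star e.2 * σ.mid) * star σ.right := by
        rw [hexp, Finset.mul_sum, Finset.sum_mul, Finset.sum_mul]
        simp only [mul_assoc]
    _ = _ := by
        refine Finset.sum_congr rfl fun e he => ?_
        rw [hce e he, hde e he]
        simp only [Triple.val, star_mul, mul_assoc]

structure IsStdFamily (A : SemigraphAlgebra k X) (s : Finset (Triple X)) : Prop where
  std : ∀ τ ∈ s, A.IsStd τ
  injOn_left : Set.InjOn Triple.left (s : Set (Triple X))
  injOn_right : Set.InjOn Triple.right (s : Set (Triple X))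
  deg_left : ∃ m, ∀ τ ∈ s, A.deg τ.left = m
  deg_right : ∃ n, ∀ τ ∈ s, A.deg τ.right = n

variable (A) in
def IsStdSum (w : X) : Prop := ∃ s, A.IsStdFamily s ∧ w = ∑ τ ∈ s, τ.val

namespace IsStdFamily

variable {s s' : Finset (Triple X)}

lemma map_swap (hs : A.IsStdFamily s) :
    A.IsStdFamily (s.map ⟨Triple.swap, Triple.swap_injective⟩) where
  std := by simpa using fun τ hτ => (hs.std τ hτ).swap
  injOn_left := by
    rintro _ hρ _ hρ' h
    obtain ⟨τ, hτ, rfl⟩ := Finset.mem_map.1 hρ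
    obtain ⟨σ, hσ, rfl⟩ := Finset.mem_map.1 hρ'
    exact congrArg _ (hs.injOn_right hτ hσ h)
  injOn_right := by
    rintro _ hρ _ hρ' h
    obtain ⟨τ, hτ, rfl⟩ := Finset.mem_map.1 hρ
    obtain ⟨σ, hσ, rfl⟩ := Finset.mem_map.1 hρ'
    exact congrArg _ (hs.injOn_left hτ hσ h)
  deg_left := by simpa using hs.deg_right
  deg_right := by simpa using hs.deg_left

lemma star_left_mul_left_eq_zero (hs : A.IsStdFamily s) {τ σ : Triple X} (hτ : τ ∈ s)
    (hσ : σ ∈ s) (hne : τ ≠ σ) : star τ.left * σ.left = 0 := by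
  obtain ⟨m, hm⟩ := hs.deg_left
  exact star_mul_eq_zero_of_deg_eq (hs.std τ hτ).1 (hs.std σ hσ).1 ((hm τ hτ).trans (hm σ hσ).symm)
    fun h => hne (hs.injOn_left hτ hσ h)

lemma star_right_mul_right_eq_zero (hs : A.IsStdFamily s) {τ σ : Triple X} (hτ : τ ∈ s)
    (hσ : σ ∈ s) (hne : τ ≠ σ) : star τ.right * σ.right = 0 := by
  obtain ⟨n, hn⟩ := hs.deg_right
  exact star_mul_eq_zero_of_deg_eq (hs.std τ hτ).2.2 (hs.std σ hσ).2.2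
    ((hn τ hτ).trans (hn σ hσ).symm) fun h => hne (hs.injOn_right hτ hσ h)

lemma eq_of_left_mul_eq (hs : A.IsStdFamily s) (hs' : A.IsStdFamily s')
    {τ τ' σ σ' : Triple X} {e f : X × X} (hτ : τ ∈ s) (hτ' : τ' ∈ s) (hσ : σ ∈ s') (hσ' : σ' ∈ s')
    (he : e ∈ mceSet A.T1 A.deg τ.right σ.left) (hf : f ∈ mceSet A.T1 A.deg τ'.right σ'.left)
    (h : τ.left * e.1 = τ'.left * f.1) (hne : τ.left * e.1 ≠ 0) :
    τ = τ' ∧ σ = σ' ∧ e = f := by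
  obtain ⟨m, hm⟩ := hs.deg_left
  obtain ⟨m', hm'⟩ := hs'.deg_left
  obtain ⟨he1, he2, hne', heq, -⟩ := he
  obtain ⟨hf1, hf2, -, hfeq, -⟩ := hf
  obtain ⟨hl, h1⟩ := eq_and_eq_of_mul_eq_mul (hs.std τ hτ).1 he1 (hs.std τ' hτ').1 hf1
    ((hm τ hτ).trans (hm τ' hτ').symm) h hne
  obtain rfl := hs.injOn_left hτ hτ' hl
  obtain ⟨hl', h2⟩ := eq_and_eq_of_mul_eq_mul (hs'.std σ hσ).1 he2 (hs'.std σ' hσ').1 hf2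
    ((hm' σ hσ).trans (hm' σ' hσ').symm) (by rw [← heq, ← hfeq, h1]) (heq ▸ hne')
  exact ⟨rfl, hs'.injOn_left hσ hσ' hl', Prod.ext h1 h2⟩

lemma eq_of_right_mul_eq (hs : A.IsStdFamily s) (hs' : A.IsStdFamily s')
    {τ τ' σ σ' : Triple X} {e f : X × X} (hτ : τ ∈ s) (hτ' : τ' ∈ s) (hσ : σ ∈ s') (hσ' : σ' ∈ s')
    (he : e ∈ mceSet A.T1 A.deg τ.right σ.left) (hf : f ∈ mceSet A.T1 A.deg τ'.right σ'.left)
    (h : σ.right * e.2 = σ'.right * f.2) (hne : σ.right * e.2 ≠ 0) :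
    τ = τ' ∧ σ = σ' ∧ e = f := by
  obtain ⟨hσ, hτ, he⟩ := hs'.map_swap.eq_of_left_mul_eq hs.map_swap (Finset.mem_map_of_mem _ hσ)
    (Finset.mem_map_of_mem _ hσ') (Finset.mem_map_of_mem _ hτ) (Finset.mem_map_of_mem _ hτ')
    (swap_mem_mceSet he) (swap_mem_mceSet hf) h hne
  exact ⟨Triple.swap_injective hτ, Triple.swap_injective hσ, Prod.swap_injective he⟩

end IsStdFamily

lemma isStdSum_sum {ι : Type*} (t : Finset ι) (G : ι → Triple X)
    (hstd : ∀ i ∈ t, (G i).val ≠ 0 → A.IsStd (G i))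
    (hleft : ∀ i ∈ t, ∀ j ∈ t, (G i).val ≠ 0 → (G j).val ≠ 0 → (G i).left = (G j).left → i = j)
    (hright : ∀ i ∈ t, ∀ j ∈ t, (G i).val ≠ 0 → (G j).val ≠ 0 → (G i).right = (G j).right → i = j)
    (hdeg : ∃ m n, ∀ i ∈ t, (G i).val ≠ 0 → A.deg (G i).left = m ∧ A.deg (G i).right = n) :
    A.IsStdSum (∑ i ∈ t, (G i).val) := by
  classical
  obtain ⟨m, n, hmn⟩ := hdeg
  -- Zero terms are dropped: their legs need not lie in `𝒯₁`.
  set t₀ := t.filter fun i => (G i).val ≠ 0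
  have ht₀ : ∀ i ∈ t₀, i ∈ t ∧ (G i).val ≠ 0 := fun i hi => Finset.mem_filter.1 hi
  have hG : Set.InjOn G t₀ := fun i hi j hj h =>
    hleft i (ht₀ i hi).1 j (ht₀ j hj).1 (ht₀ i hi).2 (ht₀ j hj).2 (congrArg Triple.left h)
  refine ⟨t₀.image G, ⟨?_, ?_, ?_, ⟨m, ?_⟩, ⟨n, ?_⟩⟩, ?_⟩
  · simpa only [Finset.forall_mem_image] using fun i hi => hstd i (ht₀ i hi).1 (ht₀ i hi).2
  · rintro _ hρ _ hρ' h
    obtain ⟨i, hi, rfl⟩ := Finset.mem_image.1 hρ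
    obtain ⟨j, hj, rfl⟩ := Finset.mem_image.1 hρ'
    exact congrArg G (hleft i (ht₀ i hi).1 j (ht₀ j hj).1 (ht₀ i hi).2 (ht₀ j hj).2 h)
  · rintro _ hρ _ hρ' h
    obtain ⟨i, hi, rfl⟩ := Finset.mem_image.1 hρ
    obtain ⟨j, hj, rfl⟩ := Finset.mem_image.1 hρ'
    exact congrArg G (hright i (ht₀ i hi).1 j (ht₀ j hj).1 (ht₀ i hi).2 (ht₀ j hj).2 h)
  · simpa only [Finset.forall_mem_image] using fun i hi => (hmn i (ht₀ i hi).1 (ht₀ i hi).2).1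
  · simpa only [Finset.forall_mem_image] using fun i hi => (hmn i (ht₀ i hi).1 (ht₀ i hi).2).2
  · rw [Finset.sum_image hG, Finset.sum_filter_ne_zero]

lemma IsStd.isStdSum_val {τ : Triple X} (hτ : A.IsStd τ) : A.IsStdSum τ.val := by
  simpa using isStdSum_sum {τ} id (by simpa using fun _ => hτ) (by simp) (by simp)
    ⟨A.deg τ.left, A.deg τ.right, by simp⟩

lemma isStdSum_star {w : X} (hw : A.IsStdSum w) : A.IsStdSum (star w) := by
  obtain ⟨s, hs, rfl⟩ := hw
  refine ⟨_, hs.map_swap, ?_⟩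
  rw [star_sum, Finset.sum_map]
  exact Finset.sum_congr rfl fun τ hτ => (hs.std τ hτ).star_val

lemma IsStdFamily.isStdSum_sum_extend {s s' : Finset (Triple X)} (hs : A.IsStdFamily s)
    (hs' : A.IsStdFamily s') (E : Triple X → Triple X → Finset (X × X))
    (m : Triple X → Triple X → X × X → X)
    (hE : ∀ τ ∈ s, ∀ σ ∈ s', ∀ e ∈ E τ σ, e ∈ mceSet A.T1 A.deg τ.right σ.left)
    (hm : ∀ τ ∈ s, ∀ σ ∈ s', ∀ e ∈ E τ σ, m τ σ e ∈ A.P1) :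
    A.IsStdSum (∑ τ ∈ s, ∑ σ ∈ s', ∑ e ∈ E τ σ,
      (⟨τ.left * e.1, m τ σ e, σ.right * e.2⟩ : Triple X).val) := by
  let J := (s ×ˢ s').sigma fun p => E p.1 p.2
  have hJ : ∀ {τ σ : Triple X} {e : X × X}, ⟨(τ, σ), e⟩ ∈ J →
      τ ∈ s ∧ σ ∈ s' ∧ e ∈ E τ σ ∧ e ∈ mceSet A.T1 A.deg τ.right σ.left := by
    intro τ σ e hj
    obtain ⟨hp, he⟩ := Finset.mem_sigma.1 hj
    obtain ⟨hτ, hσ⟩ := Finset.mem_product.1 hp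
    exact ⟨hτ, hσ, he, hE τ hτ σ hσ e he⟩
  obtain ⟨M, hM⟩ := hs.deg_left
  obtain ⟨N, hN⟩ := hs.deg_right
  obtain ⟨M', hM'⟩ := hs'.deg_left
  obtain ⟨N', hN'⟩ := hs'.deg_right
  let G : (Σ _ : Triple X × Triple X, X × X) → Triple X := fun j =>
    ⟨j.1.1.left * j.2.1, m j.1.1 j.1.2 j.2, j.1.2.right * j.2.2⟩
  suffices A.IsStdSum (∑ j ∈ J, (G j).val) by
    rwa [Finset.sum_sigma,
      Finset.sum_product (f := fun p => ∑ e ∈ E p.1 p.2, (G ⟨p, e⟩).val)] at this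
  refine isStdSum_sum J G ?_ ?_ ?_ ⟨M + ((N ⊔ M') - N), N' + ((N ⊔ M') - M'), ?_⟩
  · rintro ⟨⟨τ, σ⟩, e⟩ hj hne
    obtain ⟨hτ, hσ, he, he'⟩ := hJ hj
    exact ⟨mul_mem_T1 (hs.std τ hτ).1 he'.1 (Triple.left_ne_zero_of_val_ne_zero hne),
      hm τ hτ σ hσ e he,
      mul_mem_T1 (hs'.std σ hσ).2.2 he'.2.1 (Triple.right_ne_zero_of_val_ne_zero hne)⟩
  · rintro ⟨⟨τ, σ⟩, e⟩ hj ⟨⟨τ', σ'⟩, f⟩ hj' hne - h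
    obtain ⟨hτ, hσ, -, he⟩ := hJ hj
    obtain ⟨hτ', hσ', -, hf⟩ := hJ hj'
    obtain ⟨rfl, rfl, rfl⟩ := hs.eq_of_left_mul_eq hs' hτ hτ' hσ hσ' he hf h
      (Triple.left_ne_zero_of_val_ne_zero hne)
    rfl
  · rintro ⟨⟨τ, σ⟩, e⟩ hj ⟨⟨τ', σ'⟩, f⟩ hj' hne - h
    obtain ⟨hτ, hσ, -, he⟩ := hJ hj
    obtain ⟨hτ', hσ', -, hf⟩ := hJ hj'
    obtain ⟨rfl, rfl, rfl⟩ := hs.eq_of_right_mul_eq hs' hτ hτ' hσ hσ' he hf h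
      (Triple.right_ne_zero_of_val_ne_zero hne)
    rfl
  · rintro ⟨⟨τ, σ⟩, e⟩ hj hne
    obtain ⟨hτ, hσ, -, he⟩ := hJ hj
    constructor
    · rw [deg_mul_of_mem_T1 (hs.std τ hτ).1 he.1 (Triple.left_ne_zero_of_val_ne_zero hne),
        deg_fst_of_mem_mceSet (hs.std τ hτ).2.2 he, hM τ hτ, hN τ hτ, hM' σ hσ]
    · rw [deg_mul_of_mem_T1 (hs'.std σ hσ).2.2 he.2.1 (Triple.right_ne_zero_of_val_ne_zero hne),
        deg_snd_of_mem_mceSet (hs'.std σ hσ).1 he, hN' σ hσ, hN τ hτ, hM' σ hσ]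

lemma IsStdSum.mul {w w' : X} (hw : A.IsStdSum w) (hw' : A.IsStdSum w') :
    A.IsStdSum (w * w') := by
  obtain ⟨s, hs, rfl⟩ := hw
  obtain ⟨s', hs', rfl⟩ := hw'
  choose! E hE m hm hval using fun τ (hτ : τ ∈ s) σ (hσ : σ ∈ s') =>
    (hs.std τ hτ).exists_val_mul_val_eq_sum (hs'.std σ hσ)
  rw [Finset.sum_mul_sum]
  convert hs.isStdSum_sum_extend hs' E m hE hm using 1
  exact Finset.sum_congr rfl fun τ hτ => Finset.sum_congr rfl fun σ hσ => hval τ hτ σ hσ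

lemma IsStdFamily.sum_mul_star_sum {s : Finset (Triple X)} (hs : A.IsStdFamily s) :
    (∑ τ ∈ s, τ.val) * star (∑ τ ∈ s, τ.val) = ∑ τ ∈ s, τ.val * star τ.val := by
  rw [star_sum]
  refine Finset.sum_mul_sum_eq_sum_of_ne s _ _ fun τ hτ σ hσ hne => ?_
  rw [(hs.std σ hσ).star_val]
  exact Triple.val_mul_val_eq_zero (hs.star_right_mul_right_eq_zero hτ hσ hne)

lemma IsStdSum.mul_star_mul {w : X} (hw : A.IsStdSum w) : w * star w * w = w := by
  obtain ⟨s, hs, rfl⟩ := hw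
  rw [hs.sum_mul_star_sum, Finset.sum_mul_sum_eq_sum_of_ne]
  · exact Finset.sum_congr rfl fun τ hτ => (hs.std τ hτ).val_mul_star_val_mul_val
  intro τ hτ σ hσ hne
  rw [mul_assoc, (hs.std τ hτ).star_val,
    Triple.val_mul_val_eq_zero (hs.star_left_mul_left_eq_zero hτ hσ hne), mul_zero]

variable (A) in
def IsDiagSum (w : X) : Prop :=
  ∃ s : Finset (Triple X), (∀ τ ∈ s, A.IsStd τ ∧ τ.right = τ.left) ∧ w = ∑ τ ∈ s, τ.val

lemma IsStdSum.isDiagSum_mul_star {w : X} (hw : A.IsStdSum w) : A.IsDiagSum (w * star w) := by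
  classical
  obtain ⟨s, hs, rfl⟩ := hw
  let G : Triple X → Triple X := fun τ =>
    ⟨τ.left, τ.mid * (star τ.right * τ.right) * τ.mid, τ.left⟩
  refine ⟨s.image G, ?_, ?_⟩
  · simp only [Finset.forall_mem_image]
    intro τ hτ
    obtain ⟨hα, hp, hβ⟩ := hs.std τ hτ
    obtain ⟨q, hq, hsq⟩ := exists_star_mul_self_eq hβ
    exact ⟨⟨hα, by simpa only [G, hsq] using mul_mem_P1 (mul_mem_P1 hp hq) hp, hα⟩, rfl⟩
  · rw [hs.sum_mul_star_sum,
      Finset.sum_image (g := G) fun τ hτ σ hσ h => hs.injOn_left hτ hσ (congrArg Triple.left h :)]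
    refine Finset.sum_congr rfl fun τ hτ => ?_
    rw [(hs.std τ hτ).star_val]
    simp only [Triple.val, Triple.swap, G, mul_assoc]

lemma IsStdSum.isDiagSum_star_mul {w : X} (hw : A.IsStdSum w) : A.IsDiagSum (star w * w) := by
  simpa using (isStdSum_star hw).isDiagSum_mul_star

lemma IsDiagSum.isSelfAdjoint {w : X} (hw : A.IsDiagSum w) : IsSelfAdjoint w := by
  obtain ⟨s, hs, rfl⟩ := hw
  exact isSelfAdjoint_sum s fun τ hτ =>
    Triple.isSelfAdjoint_val (isSelfAdjoint_of_mem_P1 (hs τ hτ).1.2.1) (hs τ hτ).2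

lemma IsDiagSum.commute {u v : X} (hu : A.IsDiagSum u) (hv : A.IsDiagSum v) : Commute u v := by
  refine (IsSelfAdjoint.commute_iff hu.isSelfAdjoint hv.isSelfAdjoint).2 ?_
  obtain ⟨s, hs, rfl⟩ := hu
  obtain ⟨s', hs', rfl⟩ := hv
  rw [Finset.sum_mul_sum]
  refine isSelfAdjoint_sum s fun τ hτ => isSelfAdjoint_sum s' fun σ hσ => ?_
  obtain ⟨E, hE, m, hm, hval⟩ := (hs τ hτ).1.exists_val_mul_val_eq_sum (hs' σ hσ).1
  rw [hval]
  refine isSelfAdjoint_sum E fun e he =>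
    Triple.isSelfAdjoint_val (isSelfAdjoint_of_mem_P1 (hm e he)) ?_
  obtain ⟨-, -, -, heq, -⟩ := hE e he
  dsimp only
  rw [(hs' σ hσ).2, ← heq, (hs τ hτ).2]

lemma isStdSum_of_mem {x : X} (hx : x ∈ A.T ∪ A.P) : A.IsStdSum x := by
  rcases hx with hx | hx
  · simpa [Triple.val] using (show A.IsStd ⟨x, 1, 1⟩ from
      ⟨mem_T1_of_mem_T hx, one_mem_P1, one_mem_T1⟩).isStdSum_val
  · simpa [Triple.val] using (show A.IsStd ⟨1, x, 1⟩ from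
      ⟨one_mem_T1, Set.mem_insert_of_mem _ hx, one_mem_T1⟩).isStdSum_val

lemma isStdSum_evalWord {l : List (X × Bool)} (hl : ∀ a ∈ l, a.1 ∈ A.T ∪ A.P) :
    A.IsStdSum (evalWord l) := by
  induction l with
  | nil =>
    simpa [evalWord, Triple.val] using (show A.IsStd ⟨1, 1, 1⟩ from
      ⟨one_mem_T1, one_mem_P1, one_mem_T1⟩).isStdSum_val
  | cons a l ih =>
    have ha := isStdSum_of_mem (hl a List.mem_cons_self)
    have hletter : A.IsStdSum (if a.2 then star a.1 else a.1) := by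
      split
      exacts [isStdSum_star ha, ha]
    simpa only [evalWord, List.map_cons, List.prod_cons] using
      hletter.mul (ih fun b hb => hl b (List.mem_cons_of_mem a hb))

lemma IsWordList.starWord {l : List (X × Bool)} (hl : A.IsWordList l) :
    A.IsWordList (starWord l) := by
  refine ⟨by simpa [SemigraphAlgebra.starWord] using hl.1, fun a ha => ?_⟩
  obtain ⟨b, hb, rfl⟩ := List.mem_map.1 ha
  exact hl.2 b (List.mem_reverse.1 hb)

lemma IsWordList.append {l l' : List (X × Bool)} (hl : A.IsWordList l) (hl' : A.IsWordList l') :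
    A.IsWordList (l ++ l') :=
  ⟨by simp [hl.1], fun a ha => (List.mem_append.1 ha).elim (hl.2 a) (hl'.2 a)⟩

end SemigraphAlgebra

open SemigraphAlgebra in
/-- Lemma `semigraphwordrep`(a): in a semigraph algebra, the words form an
inverse semigroup of partial isometries: every word is a partial isometry, the
adjoint of a word is a word, products of words are words, and source and
range projections of all words commute. -/
theorem SemigraphAlgebra.words_inverse_semigroup
    {k X : Type*} [Ring X] [StarRing X] [Algebra ℂ X]
    (A : SemigraphAlgebra k X) (l l' : List (X × Bool))
    (hl : A.IsWordList l) (hl' : A.IsWordList l') :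
    evalWord l * star (evalWord l) * evalWord l = evalWord l ∧
    star (evalWord l) = evalWord (starWord l) ∧
    A.IsWordList (starWord l) ∧
    A.IsWordList (l ++ l') ∧
    evalWord (l ++ l') = evalWord l * evalWord l' ∧
    (evalWord l * star (evalWord l)) * (evalWord l' * star (evalWord l')) =
      (evalWord l' * star (evalWord l')) * (evalWord l * star (evalWord l)) ∧
    (evalWord l * star (evalWord l)) * (star (evalWord l') * evalWord l') =
      (star (evalWord l') * evalWord l') * (evalWord l * star (evalWord l)) ∧
    (star (evalWord l) * evalWord l) * (star (evalWord l') * evalWord l') =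
      (star (evalWord l') * evalWord l') * (star (evalWord l) * evalWord l) := by
  have hw := isStdSum_evalWord hl.2
  have hw' := isStdSum_evalWord hl'.2
  exact ⟨hw.mul_star_mul, (evalWord_starWord l).symm, hl.starWord, hl.append hl',
    evalWord_append l l', (hw.isDiagSum_mul_star.commute hw'.isDiagSum_mul_star).eq,
    (hw.isDiagSum_mul_star.commute hw'.isDiagSum_star_mul).eq,
    (hw.isDiagSum_star_mul.commute hw'.isDiagSum_star_mul).eq⟩
end

section
/- Let X be a *-algebra and G = {s₁,…,s_n} a finite self-adjoint set of partial isometries with commuting range projections, Z the (finite dimensional commutative) subalgebra generated by the range projections P_{sᵢ} = sᵢsᵢ*, and {p₁,…,p_N} the minimal projections of Z. Assume (a) every product sᵢsⱼ is a nonnegative linear combination of elements of G, and (b) sᵢ P_{sⱼ} sᵢ* ∈ Z for all i, j. Then for all minimal projections p_x, p_y and each i: if p_x sᵢ p_y ≠ 0 then p_x sᵢ p_y = p_x sᵢ = sᵢ p_y. -/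
/-- `p` is a minimal projection of the subalgebra `Z`: a nonzero projection in
`Z` such that every projection `q ∈ Z` satisfies `pq = p` or `pq = 0`. -/
def IsMinProjOf {X : Type*} [Ring X] [StarRing X] [Algebra ℂ X]
    (Z : Subalgebra ℂ X) (p : X) : Prop :=
  p ∈ Z ∧ p ≠ 0 ∧ p * p = p ∧ star p = p ∧
    ∀ q ∈ Z, q * q = q → star q = q → p * q = p ∨ p * q = 0

section Aux

variable {X : Type*} [Ring X] [StarRing X] [Algebra ℂ X]

/-- Every element of `Z` commutes with each range projection. -/
lemma zcomm_aux (G : Finset X)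
    (hcomm : ∀ s ∈ G, ∀ t ∈ G,
      (s * star s) * (t * star t) = (t * star t) * (s * star s))
    {t : X} (ht : t ∈ G) {z : X}
    (hz : z ∈ Algebra.adjoin ℂ ((fun s => s * star s) '' (G : Set X))) :
    z * (t * star t) = (t * star t) * z := by
  induction hz using Algebra.adjoin_induction with
  | mem x hx =>
      obtain ⟨u, hu, rfl⟩ := hx
      exact hcomm u hu t ht
  | algebraMap r => simp [Algebra.commutes]
  | add x y hx hy ihx ihy => rw [add_mul, mul_add, ihx, ihy]
  | mul x y hx hy ihx ihy => rw [mul_assoc, ihy, ← mul_assoc, ihx, mul_assoc]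

/-- `s Z s* ⊆ Z`. -/
lemma zstable_aux (G : Finset X)
    (hpi : ∀ s ∈ G, s * star s * s = s)
    (hsa : ∀ s ∈ G, star s ∈ G)
    (hcomm : ∀ s ∈ G, ∀ t ∈ G,
      (s * star s) * (t * star t) = (t * star t) * (s * star s))
    (Z : Subalgebra ℂ X)
    (hZ : Z = Algebra.adjoin ℂ ((fun s => s * star s) '' (G : Set X)))
    (hZstable : ∀ s ∈ G, ∀ t ∈ G, s * (t * star t) * star s ∈ Z)
    {s : X} (hs : s ∈ G) {z : X} (hz : z ∈ Z) :
    s * z * star s ∈ Z := by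
  subst hZ
  induction hz using Algebra.adjoin_induction with
  | mem x hx =>
      obtain ⟨u, hu, rfl⟩ := hx
      exact hZstable s hs u hu
  | algebraMap r =>
      have : s * (algebraMap ℂ X r) * star s = r • (s * star s) := by
        rw [Algebra.algebraMap_eq_smul_one, mul_smul_comm, mul_one, smul_mul_assoc]
      rw [this]
      exact Subalgebra.smul_mem _ (Algebra.subset_adjoin (Set.mem_image_of_mem _ hs)) r
  | add x y hx hy ihx ihy =>
      have : s * (x + y) * star s = s * x * star s + s * y * star s := by
        noncomm_ring
      rw [this]; exact add_mem ihx ihy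
  | mul x y hx hy ihx ihy =>
      -- s (xy) s* = (s x s*)(s y s*), using s* s commutes with x and s s* s = s
      have hss : star s * s = star s * star (star s) := by rw [star_star]
      have hc : x * (star s * s) = (star s * s) * x := by
        rw [hss]; exact zcomm_aux G hcomm (hsa s hs) hx
      have key : s * (x * y) * star s = (s * x * star s) * (s * y * star s) := by
        have h1 : (s * x * star s) * (s * y * star s)
            = s * (x * (star s * s)) * y * star s := by noncomm_ring
        rw [h1, hc]
        have h2 : s * (star s * s * x) * y * star s
            = (s * star s * s) * (x * y) * star s := by noncomm_ring
        rw [h2, hpi s hs]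
      rw [key]; exact mul_mem ihx ihy

/-- Key half: `p s q ≠ 0 → p s q = p s`. -/
lemma half_aux (G : Finset X)
    (hpi : ∀ s ∈ G, s * star s * s = s)
    (hsa : ∀ s ∈ G, star s ∈ G)
    (hcomm : ∀ s ∈ G, ∀ t ∈ G,
      (s * star s) * (t * star t) = (t * star t) * (s * star s))
    (Z : Subalgebra ℂ X)
    (hZ : Z = Algebra.adjoin ℂ ((fun s => s * star s) '' (G : Set X)))
    (hZstable : ∀ s ∈ G, ∀ t ∈ G, s * (t * star t) * star s ∈ Z)
    (p q : X) (hp : IsMinProjOf Z p) (hq : IsMinProjOf Z q)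
    (s : X) (hs : s ∈ G) (hne : p * s * q ≠ 0) :
    p * s * q = p * s := by
  obtain ⟨hpZ, hp0, hpp, hps, hpmin⟩ := hp
  obtain ⟨hqZ, hq0, hqq, hqs, _⟩ := hq
  -- q commutes with s* s
  have hss : star s * s = star s * star (star s) := by rw [star_star]
  have hc : q * (star s * s) = (star s * s) * q := by
    rw [hss]; exact zcomm_aux G hcomm (hsa s hs) (hZ ▸ hqZ)
  -- s q s* s = s q
  have key : s * q * star s * s = s * q := by
    calc s * q * star s * s = s * (q * (star s * s)) := by noncomm_ring
    _ = s * (star s * s * q) := by rw [hc]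
    _ = (s * star s * s) * q := by noncomm_ring
    _ = s * q := by rw [hpi s hs]
  -- s q s* is a projection in Z
  have hmem : s * q * star s ∈ Z := zstable_aux G hpi hsa hcomm Z hZ hZstable hs hqZ
  have hproj : (s * q * star s) * (s * q * star s) = s * q * star s := by
    calc (s * q * star s) * (s * q * star s) = (s * q * star s * s) * (q * star s) := by
          noncomm_ring
    _ = (s * q) * (q * star s) := by rw [key]
    _ = s * (q * q) * star s := by noncomm_ring
    _ = s * q * star s := by rw [hqq]
  have hstar : star (s * q * star s) = s * q * star s := by
    simp [star_mul, hqs, mul_assoc]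
  rcases hpmin _ hmem hproj hstar with h | h
  · -- p (s q s*) = p  ⇒  p s q = p s
    have := congrArg (· * s) h
    calc p * s * q = p * (s * q * star s * s) := by rw [key]; noncomm_ring
    _ = p * (s * q * star s) * s := by noncomm_ring
    _ = p * s := by rw [h]
  · -- contradiction
    exfalso; apply hne
    calc p * s * q = p * (s * (q * q)) := by rw [hqq]; noncomm_ring
    _ = p * ((s * q * star s * s) * q) := by rw [key]; noncomm_ring
    _ = (p * (s * q * star s)) * (s * q) := by noncomm_ring
    _ = 0 := by rw [h, zero_mul]

end Aux


/-- Proposition `centralAFproposition`(i): let `G` be a finite self-adjoint set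
of partial isometries with commuting range projections, `Z` the subalgebra
generated by the range projections. Assume every product `st` (`s,t ∈ G`) is a
nonnegative linear combination of elements of `G`, and `s(tt*)s* ∈ Z` for all
`s,t ∈ G`. Then for minimal projections `p, q` of `Z` and `s ∈ G`:
`p s q ≠ 0` implies `p s q = p s = s q`. -/
theorem centralAF_part_i {X : Type*} [Ring X] [StarRing X] [Algebra ℂ X]
    (G : Finset X)
    (hpi : ∀ s ∈ G, s * star s * s = s)
    (hsa : ∀ s ∈ G, star s ∈ G)
    (hcomm : ∀ s ∈ G, ∀ t ∈ G,
      (s * star s) * (t * star t) = (t * star t) * (s * star s))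
    (Z : Subalgebra ℂ X)
    (hZ : Z = Algebra.adjoin ℂ ((fun s => s * star s) '' (G : Set X)))
    (hprod : ∀ s ∈ G, ∀ t ∈ G, ∃ c : X → ℝ, (∀ u, 0 ≤ c u) ∧
      s * t = ∑ u ∈ G, (c u : ℂ) • u)
    (hZstable : ∀ s ∈ G, ∀ t ∈ G, s * (t * star t) * star s ∈ Z)
    (p q : X) (hp : IsMinProjOf Z p) (hq : IsMinProjOf Z q)
    (s : X) (hs : s ∈ G) (hne : p * s * q ≠ 0) :
    p * s * q = p * s ∧ p * s * q = s * q := by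
  refine ⟨half_aux G hpi hsa hcomm Z hZ hZstable p q hp hq s hs hne, ?_⟩
  have hstar_eq : star (q * star s * p) = p * s * q := by
    simp [star_mul, hp.2.2.2.1, hq.2.2.2.1, mul_assoc]
  have hne' : q * star s * p ≠ 0 := by
    intro h
    apply hne
    rw [← hstar_eq, h, star_zero]
  have h := half_aux G hpi hsa hcomm Z hZ hZstable q p hq hp (star s) (hsa s hs) hne'
  have := congrArg star h
  rw [hstar_eq] at this
  rw [this]
  simp [star_mul, hq.2.2.2.1, mul_assoc]
end

section
/- Let X be a semigraph algebra, f : X → Y the quotient map onto the quotient Y of X by a subset of the fiber space of X (so Y carries the induced degree map). Then f restricted to f⁻¹(f(𝒯)\{0}) ∩ 𝒯 is injective: if s, t ∈ 𝒯 with f(s) = f(t) ≠ 0, then s = t. -/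
/-! Equal nonzero images have equal degrees. Distinct elements of `𝒯` of equal degree have no
common extension, so `s* t = 0` by the expansion relation, and then
`f s = f s (f s)* f t = f s f (s* t) = 0`. -/

theorem map_eq_zero_of_star_mul_eq_zero {X Y : Type*} [Semiring X] [Star X] [Semiring Y] [Star Y]
    (f : X →+* Y) (hfstar : ∀ x : X, f (star x) = star (f x)) {s t : X}
    (hs : s * star s * s = s) (hst : star s * t = 0) (h : f s = f t) : f s = 0 :=
  calc f s = f s * star (f s) * f s := by rw [← hfstar, ← map_mul, ← map_mul, hs]
  _ = f s * f (star s * t) := by rw [map_mul, hfstar, h, mul_assoc]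
  _ = 0 := by rw [hst, map_zero, mul_zero]

namespace SemigraphAlgebra

variable {k X : Type*} [Ring X] [StarRing X] [Algebra ℂ X] (A : SemigraphAlgebra k X)

theorem eq_one_of_deg_mul_eq_deg {x a : X} (hx : x ∈ A.T) (ha : a ∈ A.T1) (hxa : x * a ≠ 0)
    (hdeg : A.deg (x * a) = A.deg x) : a = 1 := by
  rcases ha with rfl | ha
  · rfl
  · rw [A.deg_mul x hx a ha hxa] at hdeg
    exact absurd (add_eq_left.mp hdeg) (A.deg_pos a ha)

theorem mceSet_eq_empty_of_deg_eq {s t : X} (hs : s ∈ A.T) (ht : t ∈ A.T) (hst : s ≠ t)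
    (hdeg : A.deg s = A.deg t) : mceSet A.T1 A.deg s t = ∅ := by
  refine Set.eq_empty_iff_forall_notMem.2 fun ⟨a, b⟩ ⟨ha, hb, hsa, hab, hd⟩ => hst ?_
  rw [hdeg, sup_idem] at hd
  obtain rfl : a = 1 := A.eq_one_of_deg_mul_eq_deg hs ha hsa (hd.trans hdeg.symm)
  rw [mul_one] at hab hsa hd
  obtain rfl : b = 1 := A.eq_one_of_deg_mul_eq_deg ht hb (hab ▸ hsa) (hab ▸ hd)
  simpa using hab

theorem star_mul_eq_zero_of_deg_eq_s19 {s t : X} (hs : s ∈ A.T) (ht : t ∈ A.T) (hst : s ≠ t)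
    (hdeg : A.deg s = A.deg t) : star s * t = 0 := by
  obtain ⟨q, -, hexp⟩ := A.expansion s hs t ht
  rw [hexp]
  refine Finset.sum_eq_zero fun ab hab => ?_
  exact ((A.mceSet_eq_empty_of_deg_eq hs ht hst hdeg).subset
    ((Set.Finite.mem_toFinset _).1 hab)).elim

end SemigraphAlgebra

/-- Lemma `lemmaQuotientSemigraphAlgebra` (injectivity claim): if `f : X → Y`
is a `*`-homomorphism from a semigraph algebra onto a quotient by a subset of
the fiber space — so `Y` carries an induced degree map `dY` with
`dY (f t) = d(t)` for `t ∈ 𝒯` with `f t ≠ 0` — then `f` is injective on the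
part of `𝒯` not mapped to zero: `f s = f t ≠ 0` implies `s = t`. -/
theorem SemigraphAlgebra.quotient_injective_on_T
    {k X Y : Type*} [Ring X] [StarRing X] [Algebra ℂ X]
    [Ring Y] [StarRing Y]
    (A : SemigraphAlgebra k X) (f : X →+* Y)
    (hfstar : ∀ x : X, f (star x) = star (f x))
    (dY : Y → (k →₀ ℕ))
    (hdY : ∀ t ∈ A.T, f t ≠ 0 → dY (f t) = A.deg t)
    (s t : X) (hs : s ∈ A.T) (ht : t ∈ A.T)
    (h : f s = f t) (hne : f s ≠ 0) : s = t := by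
  by_contra hst
  have hdeg : A.deg s = A.deg t := by
    rw [← hdY s hs hne, ← hdY t ht (h ▸ hne), h]
  exact hne <| map_eq_zero_of_star_mul_eq_zero f hfstar (A.T_pisom s hs)
    (A.star_mul_eq_zero_of_deg_eq_s19 hs ht hst hdeg) h
end
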